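/- Define P₆(x, c) for c > 0 by: P₆ = 1 if x < c/2; P₆ = −3(c/x)⁵ + 23(c/x)⁴ − 68(c/x)³ + 96(c/x)² − 64(c/x) + 17 if c/2 ≤ x < c; P₆ = c/x if x ≥ c. Then the map x ↦ x·P₆(‖x‖, c) from ℝⁿ to ℝⁿ (with P₆ evaluated at ‖x‖) satisfies ‖x·P₆(‖x‖, c)‖ ≤ c for all x, and equals x whenever ‖x‖ ≤ c/2. -/
import Mathlib


/-- The velocity-limiter function `P₆(x, c)`. -/
noncomputable def P6 (x c : ℝ) : ℝ :=
  if x < c / 2 then 1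
  else if x < c then
    -3 * (c / x) ^ 5 + 23 * (c / x) ^ 4 - 68 * (c / x) ^ 3 + 96 * (c / x) ^ 2
      - 64 * (c / x) + 17
  else c / x

lemma p6_poly_nonneg {t : ℝ} (h1 : 1 < t) (h2 : t ≤ 2) :
    0 ≤ -3 * t ^ 5 + 23 * t ^ 4 - 68 * t ^ 3 + 96 * t ^ 2 - 64 * t + 17 := by
  nlinarith [sq_nonneg (t - 2), sq_nonneg (t - 1), mul_nonneg (sq_nonneg (t-2)) (mul_nonneg (sub_nonneg.2 h1.le) (sub_nonneg.2 (by linarith : (2:ℝ)/3 ≤ t))), sq_nonneg ((t-1)*(t-2))]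

lemma p6_poly_le {t : ℝ} (h1 : 1 < t) (h2 : t ≤ 2) :
    -3 * t ^ 5 + 23 * t ^ 4 - 68 * t ^ 3 + 96 * t ^ 2 - 64 * t + 17 ≤ t := by
  nlinarith [mul_nonneg (mul_nonneg (sub_nonneg.2 h1.le) (sq_nonneg (1 - (2 - t)))) (by nlinarith [sq_nonneg (2-t)] : (0:ℝ) ≤ 3*(2-t)^2 + 2*(2-t) + 1)]

lemma P6_nonneg (c : ℝ) (hc : 0 < c) (r : ℝ) (hr : 0 ≤ r) : 0 ≤ P6 r c := by
  unfold P6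
  split_ifs with h1 h2
  · norm_num
  · have hrpos : 0 < r := by linarith
    have ht1 : 1 < c / r := (one_lt_div hrpos).2 h2
    have ht2 : c / r ≤ 2 := by rw [div_le_iff₀ hrpos]; linarith
    have := p6_poly_nonneg ht1 ht2
    linarith [this]
  · have hrpos : 0 < r := lt_of_lt_of_le hc (not_lt.1 h2)
    positivity

lemma P6_mul_le (c : ℝ) (hc : 0 < c) (r : ℝ) (hr : 0 ≤ r) : P6 r c * r ≤ c := by
  unfold P6
  split_ifs with h1 h2
  · linarith
  · have hrpos : 0 < r := by linarith
    have ht1 : 1 < c / r := (one_lt_div hrpos).2 h2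
    have ht2 : c / r ≤ 2 := by rw [div_le_iff₀ hrpos]; linarith
    have h := p6_poly_le ht1 ht2
    have : (c / r) * r = c := div_mul_cancel₀ c hrpos.ne'
    nlinarith
  · have hrpos : 0 < r := lt_of_lt_of_le hc (not_lt.1 h2)
    rw [div_mul_cancel₀ c hrpos.ne']

/-- The limited velocity `x ↦ P₆(‖x‖,c) • x` has norm at most `c` and equals `x`
whenever `‖x‖ ≤ c/2`. -/
theorem stmt17 {n : ℕ} (c : ℝ) (hc : 0 < c) (x : EuclideanSpace ℝ (Fin n)) :
    ‖P6 ‖x‖ c • x‖ ≤ c ∧ (‖x‖ ≤ c / 2 → P6 ‖x‖ c • x = x) := by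
  constructor
  · rw [norm_smul, Real.norm_eq_abs, abs_of_nonneg (P6_nonneg c hc _ (norm_nonneg x))]
    exact P6_mul_le c hc _ (norm_nonneg x)
  · intro hle
    have hP : P6 ‖x‖ c = 1 := by
      unfold P6
      split_ifs with h1 h2
      · rfl
      · have heq : ‖x‖ = c / 2 := le_antisymm hle (not_lt.1 h1)
        have hx0 : ‖x‖ ≠ 0 := by rw [heq]; positivity
        have : c / ‖x‖ = 2 := by rw [heq]; field_simp
        rw [this]; norm_num
      · exfalso; have := not_lt.1 h2; linarith
    rw [hP, one_smul]
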